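/- arXiv:1705.07550 — 3 statements merged into one kernel-verified Lean document; each statement's English description precedes it below -/
import Mathlib

section
/- Let F : C([-τ,0];ℝ) → ℝ be defined by F(u) = p - u(u(0)) on the set of u with u(0) ∈ [-τ, 0]. If u is continuously differentiable and v is continuous, then the map (u,v) ↦ -u'(u(0))·v(0) - v(u(0)) is continuous on C¹ × C⁰ (with the C¹ norm on the first factor and the sup norm on the second). -/
open Real Set

/-! Only continuity of `u'` and `v` at the point `u 0` matters: `u₁'(u₁ 0)` differs from `u'(u 0)`
by the `C¹` error at `u₁ 0` plus the oscillation of `u'` between `u₁ 0` and `u 0`, and likewise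
for `v₁(u₁ 0)`; the claim then follows from continuity of `(a, b, c) ↦ -a b - c`. -/

theorem ContinuousAt.exists_forall_dist_lt_of_dist_apply_le {X Y : Type*} [PseudoMetricSpace X]
    [PseudoMetricSpace Y] {f : X → Y} {x₀ : X} (hf : ContinuousAt f x₀) {ε : ℝ} (hε : 0 < ε) :
    ∃ δ > 0, ∀ x y, dist x x₀ ≤ δ → dist y (f x) ≤ δ → dist y (f x₀) < ε := by
  obtain ⟨η, hη, hfη⟩ := Metric.continuousAt_iff.1 hf (ε / 2) (half_pos hε)
  refine ⟨min (η / 2) (ε / 2), by positivity, fun x y hx hy => ?_⟩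
  have hfx : dist (f x) (f x₀) < ε / 2 :=
    hfη (hx.trans_lt ((min_le_left _ _).trans_lt (half_lt_self hη)))
  calc dist y (f x₀) ≤ dist y (f x) + dist (f x) (f x₀) := dist_triangle _ _ _
    _ < ε / 2 + ε / 2 := add_lt_add_of_le_of_lt (hy.trans (min_le_right _ _)) hfx
    _ = ε := add_halves ε

theorem stmt7_general (τ : ℝ)
    (u : ℝ → ℝ) (v : ℝ → ℝ)
    (hu : ContDiff ℝ 1 u) (hv : Continuous v) :
    ∀ ε > 0, ∃ δ > 0, ∀ u₁ v₁ : ℝ → ℝ,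
      ContDiff ℝ 1 u₁ → Continuous v₁ → u₁ 0 ∈ Icc (-τ) 0 →
      (∀ t ∈ Icc (-τ) 0, |u₁ t - u t| ≤ δ ∧ |deriv u₁ t - deriv u t| ≤ δ) →
      (∀ t ∈ Icc (-τ) 0, |v₁ t - v t| ≤ δ) →
      |(-(deriv u₁ (u₁ 0) * v₁ 0) - v₁ (u₁ 0)) - (-(deriv u (u 0) * v 0) - v (u 0))| < ε := by
  intro ε hε
  have hF : ContinuousAt (fun p : ℝ × ℝ × ℝ => -(p.1 * p.2.1) - p.2.2)
      (deriv u (u 0), v 0, v (u 0)) := by fun_prop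
  obtain ⟨η, hη, hFη⟩ := Metric.continuousAt_iff.1 hF ε hε
  obtain ⟨δ₁, hδ₁, hu'⟩ :=
    (hu.continuous_deriv le_rfl).continuousAt.exists_forall_dist_lt_of_dist_apply_le hη
  obtain ⟨δ₂, hδ₂, hv'⟩ := hv.continuousAt.exists_forall_dist_lt_of_dist_apply_le hη
  refine ⟨min (min δ₁ δ₂) (η / 2), by positivity, ?_⟩
  intro u₁ v₁ _ _ hu₁0 hU hV
  have hδ : min (min δ₁ δ₂) (η / 2) < η := (min_le_right _ _).trans_lt (half_lt_self hη)
  have h0 : (0 : ℝ) ∈ Icc (-τ) 0 := ⟨hu₁0.1.trans hu₁0.2, le_rfl⟩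
  have hx : |u₁ 0 - u 0| ≤ min (min δ₁ δ₂) (η / 2) := (hU 0 h0).1
  have ha := hu' (u₁ 0) (deriv u₁ (u₁ 0)) (hx.trans (by simp)) ((hU _ hu₁0).2.trans (by simp))
  have hc := hv' (u₁ 0) (v₁ (u₁ 0)) (hx.trans (by simp)) ((hV _ hu₁0).trans (by simp))
  have hb : |v₁ 0 - v 0| < η := (hV 0 h0).trans_lt hδ
  have hclose : dist (deriv u₁ (u₁ 0), v₁ 0, v₁ (u₁ 0)) (deriv u (u 0), v 0, v (u 0)) < η := by
    simp only [Prod.dist_eq, Real.dist_eq, max_lt_iff] at ha hc ⊢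
    exact ⟨ha, hb, hc⟩
  simpa only [Real.dist_eq] using hFη hclose

/-- The map `(u,v) ↦ -u'(u(0))·v(0) - v(u(0))` (the derivative of the
sd-DDE functional `F(u) = p - u(u(0))`) is continuous on `C¹ × C⁰`:
continuity at each `(u,v)` with respect to the `C¹`-norm in `u`
(sup norm of `u` and `u'` on `[-τ,0]`) and the sup norm in `v`. -/
theorem stmt7 (τ : ℝ) (hτ : 0 < τ)
    (u : ℝ → ℝ) (v : ℝ → ℝ)
    (hu : ContDiff ℝ 1 u) (hv : Continuous v)
    (hu0 : u 0 ∈ Icc (-τ) 0) :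
    ∀ ε > 0, ∃ δ > 0, ∀ u₁ v₁ : ℝ → ℝ,
      ContDiff ℝ 1 u₁ → Continuous v₁ → u₁ 0 ∈ Icc (-τ) 0 →
      (∀ t ∈ Icc (-τ) 0, |u₁ t - u t| ≤ δ ∧ |deriv u₁ t - deriv u t| ≤ δ) →
      (∀ t ∈ Icc (-τ) 0, |v₁ t - v t| ≤ δ) →
      |(-(deriv u₁ (u₁ 0) * v₁ 0) - v₁ (u₁ 0)) - (-(deriv u (u 0) * v 0) - v (u 0))| < ε :=
  stmt7_general τ u v hu hv
end

section
/- Suppose u : [-τ_max, ∞) → ℝⁿ is continuous, continuously differentiable on [0,∞), and satisfies u'(t) = f(u(t), u(t - τ(u(t)))) for t ≥ 0, where f and τ are continuously differentiable and 0 ≤ τ ≤ τ_max. Then u is twice continuously differentiable on (τ_max, ∞), and u''(t) = ∂₁f·u'(t) + ∂₂f·u'(t - τ(u(t)))·(1 - ∇τ(u(t))·u'(t)), where the partial derivatives of f are evaluated at (u(t), u(t - τ(u(t)))). -/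
/-!
For `t > τmax` the delayed time `t - τ(u t)` is positive, so `u` is differentiable both at `t` and
at the delayed time. The chain rule then differentiates the right-hand side
`s ↦ f (u s, u (s - τ (u s)))` of the equation, which coincides with `u'` near `t`; the resulting
derivative is built from continuous ingredients, hence continuous.
-/

open Set

section DelayedComposition

variable {E G : Type*} [NormedAddCommGroup E] [NormedSpace ℝ E]
  [NormedAddCommGroup G] [NormedSpace ℝ G]

theorem HasDerivAt.comp_sub_delay {u : ℝ → E} {τ : E → ℝ} {t : ℝ} {v w : E}
    (hu : HasDerivAt u v t) (hud : HasDerivAt u w (t - τ (u t)))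
    (hτ : DifferentiableAt ℝ τ (u t)) :
    HasDerivAt (fun s => u (s - τ (u s))) ((1 - fderiv ℝ τ (u t) v) • w) t :=
  hud.scomp t ((hasDerivAt_id t).sub (hτ.hasFDerivAt.comp_hasDerivAt t hu))

theorem HasDerivAt.comp_delay_rhs {u : ℝ → E} {τ : E → ℝ} {F : E × E → G} {t : ℝ}
    {v w : E} (hu : HasDerivAt u v t) (hud : HasDerivAt u w (t - τ (u t)))
    (hτ : DifferentiableAt ℝ τ (u t)) (hF : DifferentiableAt ℝ F (u t, u (t - τ (u t)))) :
    HasDerivAt (fun s => F (u s, u (s - τ (u s))))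
      (fderiv ℝ F (u t, u (t - τ (u t))) (v, (1 - fderiv ℝ τ (u t) v) • w)) t :=
  hF.hasFDerivAt.comp_hasDerivAt t (hu.prodMk (hu.comp_sub_delay hud hτ))

theorem continuousOn_fderiv_delay_rhs {u u' : ℝ → E} {τ : E → ℝ} {F : E × E → G}
    {S s : Set ℝ} (hF : ContDiff ℝ 1 F) (hτ : ContDiff ℝ 1 τ) (hu : ContinuousOn u S)
    (hu' : ContinuousOn u' S) (hs : s ⊆ S) (hdelay : MapsTo (fun t => t - τ (u t)) s S) :
    ContinuousOn (fun t => fderiv ℝ F (u t, u (t - τ (u t)))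
      (u' t, (1 - fderiv ℝ τ (u t) (u' t)) • u' (t - τ (u t)))) s := by
  have hdelay_cont : ContinuousOn (fun t => t - τ (u t)) s :=
    continuousOn_id.sub (hτ.continuous.comp_continuousOn (hu.mono hs))
  have hDF : ContinuousOn (fun t => fderiv ℝ F (u t, u (t - τ (u t)))) s :=
    (hF.continuous_fderiv one_ne_zero).comp_continuousOn
      ((hu.mono hs).prodMk (hu.comp hdelay_cont hdelay))
  have hDτ : ContinuousOn (fun t => fderiv ℝ τ (u t)) s :=
    (hτ.continuous_fderiv one_ne_zero).comp_continuousOn (hu.mono hs)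
  exact hDF.clm_apply ((hu'.mono hs).prodMk
    ((continuousOn_const.sub (hDτ.clm_apply (hu'.mono hs))).smul (hu'.comp hdelay_cont hdelay)))

end DelayedComposition

theorem stmt10_general (n : ℕ) (τmax : ℝ)
    (u u' : ℝ → EuclideanSpace ℝ (Fin n))
    (f : EuclideanSpace ℝ (Fin n) → EuclideanSpace ℝ (Fin n) → EuclideanSpace ℝ (Fin n))
    (tau : EuclideanSpace ℝ (Fin n) → ℝ)
    (hf : ContDiff ℝ 1 (fun p : EuclideanSpace ℝ (Fin n) × EuclideanSpace ℝ (Fin n) => f p.1 p.2))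
    (htau : ContDiff ℝ 1 tau)
    (htaurange : ∀ x, tau x ∈ Icc 0 τmax)
    (hu' : ∀ s ∈ Ioi (0 : ℝ), HasDerivAt u (u' s) s)
    (hu'c : ContinuousOn u' (Ici (0 : ℝ)))
    (hdde : ∀ s ∈ Ici (0 : ℝ), u' s = f (u s) (u (s - tau (u s)))) :
    (∀ t ∈ Ioi τmax,
      HasDerivAt u'
        (fderiv ℝ (fun p : EuclideanSpace ℝ (Fin n) × EuclideanSpace ℝ (Fin n) => f p.1 p.2)
          (u t, u (t - tau (u t)))
          (u' t, (1 - fderiv ℝ tau (u t) (u' t)) • u' (t - tau (u t)))) t) ∧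
    ContinuousOn (fun t =>
        fderiv ℝ (fun p : EuclideanSpace ℝ (Fin n) × EuclideanSpace ℝ (Fin n) => f p.1 p.2)
          (u t, u (t - tau (u t)))
          (u' t, (1 - fderiv ℝ tau (u t) (u' t)) • u' (t - tau (u t)))) (Ioi τmax) := by
  have hdelay_pos : ∀ t ∈ Ioi τmax, 0 < t - tau (u t) := fun t ht => by
    linarith [(htaurange (u t)).2, mem_Ioi.mp ht]
  have hpos : ∀ t ∈ Ioi τmax, 0 < t := fun t ht => by
    linarith [(htaurange (u t)).1, hdelay_pos t ht]
  have hu : ContinuousOn u (Ioi 0) := fun s hs => (hu' s hs).continuousAt.continuousWithinAt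
  refine ⟨fun t ht => ?_, ?_⟩
  · have hrhs := (hu' t (hpos t ht)).comp_delay_rhs (hu' _ (hdelay_pos t ht))
      (htau.differentiable one_ne_zero _) (hf.differentiable one_ne_zero _)
    refine hrhs.congr_of_eventuallyEq ?_
    filter_upwards [Ioi_mem_nhds (hpos t ht)] with s hs using hdde s (mem_Ioi.mp hs).le
  · exact continuousOn_fderiv_delay_rhs hf htau hu (hu'c.mono Ioi_subset_Ici_self) hpos hdelay_pos

/-- Smoothing for sd-DDEs (case ℓ = 2): if `u` is continuous, continuously
differentiable on `[0,∞)` with `u'(t) = f(u(t), u(t - τ(u(t))))` for `t ≥ 0`,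
where `f, τ` are `C¹` and `0 ≤ τ ≤ τ_max`, then `u` is twice continuously
differentiable on `(τ_max, ∞)` with
`u''(t) = Df(u(t), u(t-τ(u(t)))) (u'(t), (1 - ∇τ(u(t))·u'(t))·u'(t-τ(u(t))))`,
which equals `∂₁f·u'(t) + ∂₂f·u'(t-τ(u(t)))·(1 - ∇τ(u(t))·u'(t))`. -/
theorem stmt10 (n : ℕ) (τmax : ℝ) (hτmax : 0 ≤ τmax)
    (u u' : ℝ → EuclideanSpace ℝ (Fin n))
    (f : EuclideanSpace ℝ (Fin n) → EuclideanSpace ℝ (Fin n) → EuclideanSpace ℝ (Fin n))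
    (tau : EuclideanSpace ℝ (Fin n) → ℝ)
    (hf : ContDiff ℝ 1 (fun p : EuclideanSpace ℝ (Fin n) × EuclideanSpace ℝ (Fin n) => f p.1 p.2))
    (htau : ContDiff ℝ 1 tau)
    (htaurange : ∀ x, tau x ∈ Icc 0 τmax)
    (hu : Continuous u)
    (hu' : ∀ s ∈ Ioi (0 : ℝ), HasDerivAt u (u' s) s)
    (hu'c : ContinuousOn u' (Ici (0 : ℝ)))
    (hdde : ∀ s ∈ Ici (0 : ℝ), u' s = f (u s) (u (s - tau (u s)))) :
    (∀ t ∈ Ioi τmax,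
      HasDerivAt u'
        (fderiv ℝ (fun p : EuclideanSpace ℝ (Fin n) × EuclideanSpace ℝ (Fin n) => f p.1 p.2)
          (u t, u (t - tau (u t)))
          (u' t, (1 - fderiv ℝ tau (u t) (u' t)) • u' (t - tau (u t)))) t) ∧
    ContinuousOn (fun t =>
        fderiv ℝ (fun p : EuclideanSpace ℝ (Fin n) × EuclideanSpace ℝ (Fin n) => f p.1 p.2)
          (u t, u (t - tau (u t)))
          (u' t, (1 - fderiv ℝ tau (u t) (u' t)) • u' (t - tau (u t)))) (Ioi τmax) :=
  stmt10_general n τmax u u' f tau hf htau htaurange hu' hu'c hdde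
end

section
/- Let A be a linear functional on continuous functions of the form Au = Σ A_j u(-τ_j), and let λ ∈ ℂ be such that Δ(λ) = λI - Σ A_j e^{-λτ_j} is invertible. Then for every continuous v : [-τ_max,0] → ℂⁿ, the function x(θ) = e^{λθ}x₀ + ∫_θ⁰ e^{λ(θ-s)} v(s) ds with x₀ = Δ(λ)⁻¹ [ v(0) + A(θ ↦ ∫_θ⁰ e^{λ(θ-s)}v(s) ds) ] is the unique C¹ solution of the resolvent system: λx(0) - Ax = v(0) and λx(θ) - x'(θ) = v(θ) for all θ ∈ [-τ_max, 0]. -/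
/-!
On `[-τ, 0]` the equation `λx - x' = v` is linear of first order, so its solutions are exactly
`θ ↦ e^{λθ} c + ∫_θ⁰ e^{λ(θ-s)} v(s) ds`, the constant `c` being the value at `0`. Plugging this
family into the boundary condition `λx(0) - Ax = v(0)` turns it into the linear system
`Δ(λ) c = v(0) + A(θ ↦ ∫_θ⁰ e^{λ(θ-s)} v(s) ds)`, which has the unique solution `x₀` when
`Δ(λ)` is invertible.
-/

open Complex Set intervalIntegral
open scoped Matrix

section ScalarODE

theorem hasDerivAt_cexp_mul_ofReal (lam : ℂ) (θ : ℝ) :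
    HasDerivAt (fun t : ℝ => cexp (lam * t)) (lam * cexp (lam * θ)) θ := by
  simpa [mul_comm] using ((hasDerivAt_id θ).ofReal_comp.const_mul lam).cexp

variable {E : Type*} [NormedAddCommGroup E] [NormedSpace ℂ E] {lam : ℂ}

theorem eqOn_cexp_smul_of_hasDerivWithinAt {w : ℝ → E} {a : ℝ}
    (hw : ∀ θ ∈ Icc a 0, HasDerivWithinAt w (lam • w θ) (Icc a 0) θ) :
    ∀ θ ∈ Icc a 0, w θ = cexp (lam * θ) • w 0 := by
  set z : ℝ → E := fun t => cexp (-lam * t) • w t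
  have hz : ∀ θ ∈ Icc a 0, HasDerivWithinAt z 0 (Icc a 0) θ := fun θ hθ => by
    refine ((hasDerivAt_cexp_mul_ofReal (-lam) θ).hasDerivWithinAt.smul
      (hw θ hθ)).congr_deriv ?_
    rw [smul_smul, ← add_smul]
    ring_nf
    rw [zero_smul]
  have hz_const := constant_of_has_deriv_right_zero (fun t ht => (hz t ht).continuousWithinAt)
    fun t ht => (hz t (Ico_subset_Icc_self ht)).mono_of_mem_nhdsWithin (Icc_mem_nhdsGE_of_mem ht)
  intro θ hθ
  have hz0 : z θ = w 0 := by
    simpa [z] using (hz_const θ hθ).trans (hz_const 0 ⟨hθ.1.trans hθ.2, le_rfl⟩).symm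
  rw [← hz0, smul_smul, ← Complex.exp_add, neg_mul, add_neg_cancel, Complex.exp_zero, one_smul]

variable [CompleteSpace E] {v : ℝ → E} {a θ : ℝ}

theorem hasDerivWithinAt_cexp_smul_add_integral (hv : ContinuousOn v (Icc a 0)) (x₀ : E)
    (hθ : θ ∈ Icc a 0) :
    HasDerivWithinAt (fun t : ℝ => cexp (lam * t) • x₀ + ∫ s in t..0, cexp (lam * (t - s)) • v s)
      (lam • (cexp (lam * θ) • x₀ + ∫ s in θ..0, cexp (lam * (θ - s)) • v s) - v θ)
      (Icc a 0) θ := by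
  set K : ℝ → E := fun t => ∫ s in t..0, cexp (-(lam * s)) • v s
  have hg : ContinuousOn (fun s : ℝ => cexp (-(lam * s)) • v s) (Icc a 0) :=
    (Continuous.continuousOn (by fun_prop)).smul hv
  have hK : HasDerivWithinAt K (-(cexp (-(lam * θ)) • v θ)) (Icc a 0) θ := by
    have : Fact (θ ∈ Icc a 0) := ⟨hθ⟩
    refine integral_hasDerivWithinAt_left ?_
      (hg.stronglyMeasurableAtFilter_nhdsWithin measurableSet_Icc θ) (hg θ hθ)
    refine (hg.mono ?_).intervalIntegrable
    rw [uIcc_of_le hθ.2]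
    exact Icc_subset_Icc_left hθ.1
  -- Factoring out `e^{λt}` makes the integrand independent of `t`, so the FTC applies to `K`.
  have hfactor : ∀ t : ℝ, (∫ s in t..0, cexp (lam * (t - s)) • v s) = cexp (lam * t) • K t := by
    intro t
    rw [← integral_smul]
    refine integral_congr fun s _ => ?_
    rw [smul_smul, ← Complex.exp_add]
    ring_nf
  simp only [hfactor, ← smul_add]
  refine ((hasDerivAt_cexp_mul_ofReal lam θ).hasDerivWithinAt.smul
    (hK.const_add x₀)).congr_deriv ?_
  rw [smul_neg, smul_smul, ← Complex.exp_add, add_neg_cancel, Complex.exp_zero, one_smul,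
    smul_smul, mul_comm]
  abel

end ScalarODE

section DelayBoundary

variable {n m : ℕ} (lam : ℂ) (M : Fin m → Matrix (Fin n) (Fin n) ℂ) (d : Fin m → ℝ)

noncomputable def charMatrix : Matrix (Fin n) (Fin n) ℂ :=
  lam • (1 : Matrix (Fin n) (Fin n) ℂ) - ∑ j, cexp (-(lam * d j)) • M j

def delayBoundary (x : ℝ → Fin n → ℂ) : Fin n → ℂ :=
  lam • x 0 - ∑ j, M j *ᵥ x (-d j)

theorem delayBoundary_add (x y : ℝ → Fin n → ℂ) :
    delayBoundary lam M d (x + y) = delayBoundary lam M d x + delayBoundary lam M d y := by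
  simp only [delayBoundary, Pi.add_apply, smul_add, Matrix.mulVec_add, Finset.sum_add_distrib]
  abel

theorem delayBoundary_sub (x y : ℝ → Fin n → ℂ) :
    delayBoundary lam M d (x - y) = delayBoundary lam M d x - delayBoundary lam M d y := by
  simp only [delayBoundary, Pi.sub_apply, smul_sub, Matrix.mulVec_sub, Finset.sum_sub_distrib]
  abel

theorem delayBoundary_congr {τ : ℝ} (hτ : 0 ≤ τ) (hd : ∀ j, d j ∈ Icc 0 τ)
    {x y : ℝ → Fin n → ℂ} (hxy : EqOn x y (Icc (-τ) 0)) :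
    delayBoundary lam M d x = delayBoundary lam M d y := by
  have hmem : ∀ j, -d j ∈ Icc (-τ) 0 := fun j => ⟨neg_le_neg (hd j).2, neg_nonpos.2 (hd j).1⟩
  simp only [delayBoundary, hxy ⟨neg_nonpos.2 hτ, le_rfl⟩, hxy (hmem _)]

theorem delayBoundary_cexp_smul (c : Fin n → ℂ) :
    delayBoundary lam M d (fun θ => cexp (lam * θ) • c) = charMatrix lam M d *ᵥ c := by
  simp only [delayBoundary, charMatrix, Matrix.sub_mulVec, Matrix.sum_mulVec, Matrix.smul_mulVec,
    Matrix.one_mulVec, Matrix.mulVec_smul, ofReal_zero, mul_zero, Complex.exp_zero, one_smul,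
    ofReal_neg, mul_neg]

end DelayBoundary

/-- Resolvent formula for a linear DDE with discrete delays: if `Δ(λ)` is
invertible then
`x(θ) = e^{λθ}x₀ + ∫_θ⁰ e^{λ(θ-s)} v(s) ds` with
`x₀ = Δ(λ)⁻¹[v(0) + A(θ ↦ ∫_θ⁰ e^{λ(θ-s)}v(s) ds)]`
is the unique `C¹` solution of `λx(0) - Ax = v(0)`,
`λx(θ) - x'(θ) = v(θ)` on `[-τ_max,0]`. -/
theorem stmt14 (n m : ℕ) (M : Fin m → Matrix (Fin n) (Fin n) ℂ)
    (d : Fin m → ℝ) (τmax : ℝ) (hτmax : 0 < τmax) (hd : ∀ j, d j ∈ Icc 0 τmax)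
    (lam : ℂ)
    (hinv : IsUnit ((lam • (1 : Matrix (Fin n) (Fin n) ℂ)
        - ∑ j, Complex.exp (-(lam * d j)) • M j).det))
    (v : ℝ → Fin n → ℂ) (hv : ContinuousOn v (Icc (-τmax) 0))
    (J : ℝ → Fin n → ℂ)
    (hJ : ∀ θ : ℝ, J θ = ∫ s in θ..0, Complex.exp (lam * (θ - s)) • v s)
    (x₀ : Fin n → ℂ)
    (hx₀ : x₀ = (lam • (1 : Matrix (Fin n) (Fin n) ℂ)
        - ∑ j, Complex.exp (-(lam * d j)) • M j)⁻¹.mulVec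
          (v 0 + ∑ j, (M j).mulVec (J (-(d j)))))
    (x : ℝ → Fin n → ℂ)
    (hx : ∀ θ : ℝ, x θ = Complex.exp (lam * θ) • x₀ + J θ) :
    (lam • x 0 - ∑ j, (M j).mulVec (x (-(d j))) = v 0) ∧
    (∀ θ ∈ Icc (-τmax) 0, HasDerivWithinAt x (lam • x θ - v θ) (Icc (-τmax) 0) θ) ∧
    (∀ y : ℝ → Fin n → ℂ,
      (∀ θ ∈ Icc (-τmax) 0, HasDerivWithinAt y (lam • y θ - v θ) (Icc (-τmax) 0) θ) →
      (lam • y 0 - ∑ j, (M j).mulVec (y (-(d j))) = v 0) →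
      EqOn y x (Icc (-τmax) 0)) := by
  have hxJ : x = (fun θ : ℝ => cexp (lam * θ) • x₀) + J := funext hx
  have hx_deriv : ∀ θ ∈ Icc (-τmax) 0,
      HasDerivWithinAt x (lam • x θ - v θ) (Icc (-τmax) 0) θ := by
    simp only [funext hx, hJ]
    exact fun θ hθ => hasDerivWithinAt_cexp_smul_add_integral hv x₀ hθ
  have hx_bdry : delayBoundary lam M d x = v 0 := by
    have hJ0 : J 0 = 0 := by rw [hJ, integral_same]
    rw [hxJ, delayBoundary_add, delayBoundary_cexp_smul, charMatrix, hx₀, Matrix.mulVec_mulVec,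
      Matrix.mul_nonsing_inv _ hinv, Matrix.one_mulVec, delayBoundary, hJ0, smul_zero, zero_sub,
      add_neg_cancel_right]
  refine ⟨hx_bdry, hx_deriv, fun y hy_deriv hy_bdry => ?_⟩
  have hw_deriv : ∀ θ ∈ Icc (-τmax) 0,
      HasDerivWithinAt (y - x) (lam • (y - x) θ) (Icc (-τmax) 0) θ := fun θ hθ => by
    refine ((hy_deriv θ hθ).sub (hx_deriv θ hθ)).congr_deriv ?_
    simp only [Pi.sub_apply, smul_sub]
    abel
  have hw := eqOn_cexp_smul_of_hasDerivWithinAt hw_deriv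
  have hw0 : (y - x) 0 = 0 := by
    refine Matrix.eq_zero_of_mulVec_eq_zero hinv.ne_zero ?_
    rw [← charMatrix, ← delayBoundary_cexp_smul,
      ← delayBoundary_congr lam M d hτmax.le hd hw, delayBoundary_sub]
    exact sub_eq_zero.2 (hy_bdry.trans hx_bdry.symm)
  intro θ hθ
  simpa [hw0, sub_eq_zero] using hw θ hθ
end
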